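/- arXiv:2506.15281 — 4 statements merged into one kernel-verified Lean document; each statement's English description precedes it below -/
import Mathlib

section
/- Let K be a field, Xᵢ, Yᵢ ⊆ K finite with Yᵢ ⊆ Xᵢ, P = (∏Xᵢ) \ (∏Yᵢ), and λ ∈ ℕ₀ such that each Xᵢ and each Yᵢ is λ-null. Suppose f ∈ K[x₁,…,xₙ] has α in its support with: αᵢ < |Xᵢ| for all i; αᵢ < |Xᵢ| − |Yᵢ| for some i; and Σᵢ αᵢ ≥ deg(f) − λ. Then there exists z ∈ P with f(z) ≠ 0. -/
/-- A finite set `A ⊆ K` is `lam`-null: the coefficients of `∏_{a∈A}(x-a)` in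
degrees `|A|-lam, …, |A|-1` vanish. -/
def IsNull {K : Type*} [Field K] (lam : ℕ) (A : Finset K) : Prop :=
  ∀ b : ℕ, A.card - lam ≤ b → b < A.card →
    (∏ a ∈ A, (Polynomial.X - Polynomial.C a)).coeff b = 0

/-- A multivariate polynomial is `lam`-lacunary. -/
def MvLacunary {K : Type*} [CommSemiring K] {n : ℕ} (lam : Fin n → ℕ)
    (g : MvPolynomial (Fin n) K) : Prop :=
  ∃ μ ∈ g.support, ∀ ν ∈ g.support, ∀ i, ν i + lam i < μ i ∨ ν i = μ i

/-- An admissible monomial ordering: total order compatible with addition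
and refining coordinatewise divisibility. -/
def Admissible {n : ℕ} (ord : LinearOrder (Fin n →₀ ℕ)) : Prop :=
  (∀ a b c : Fin n →₀ ℕ, ord.le a b → ord.le (a + c) (b + c)) ∧
  (∀ a b : Fin n →₀ ℕ, (∀ i, a i ≤ b i) → ord.le a b)

/-- Leading exponent of a nonzero polynomial w.r.t. an ordering. -/
noncomputable def leadExp {K : Type*} [CommSemiring K] {n : ℕ}
    (ord : LinearOrder (Fin n →₀ ℕ)) (g : MvPolynomial (Fin n) K) (hg : g ≠ 0) :
    Fin n →₀ ℕ :=
  @Finset.max' _ ord g.support (MvPolynomial.support_nonempty.mpr hg)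

/-- The vanishing ideal of a set of points. -/
noncomputable def vanishingIdealOn {K : Type*} [Field K] {n : ℕ} (X : Set (Fin n → K)) :
    Ideal (MvPolynomial (Fin n) K) where
  carrier := {f | ∀ x ∈ X, MvPolynomial.eval x f = 0}
  add_mem' := by intro a b ha hb x hx; simp [ha x hx, hb x hx]
  zero_mem' := by intro x hx; simp
  smul_mem' := by intro c a ha x hx; simp [smul_eq_mul, ha x hx]

/-- `B` is a Gröbner basis of `I` w.r.t. `ord`. -/
def IsGroebner {K : Type*} [Field K] {n : ℕ} (ord : LinearOrder (Fin n →₀ ℕ))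
    (B : Set (MvPolynomial (Fin n) K)) (I : Ideal (MvPolynomial (Fin n) K)) : Prop :=
  Ideal.span B = I ∧
  ∀ f, f ∈ I → ∀ hf : f ≠ 0, ∃ g ∈ B, ∃ hg : g ≠ 0,
    ∀ i, leadExp ord g hg i ≤ leadExp ord f hf i

/-- Standard monomials of an ideal `J`: exponents not divisible by the leading
monomial of any nonzero element of `J`. -/
def stdMon {K : Type*} [Field K] {n : ℕ} (ord : LinearOrder (Fin n →₀ ℕ))
    (J : Ideal (MvPolynomial (Fin n) K)) : Set (Fin n →₀ ℕ) :=
  {α | ∀ g ∈ J, ∀ hg : g ≠ 0, ¬ ∀ i, leadExp ord g hg i ≤ α i}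

/-- `f` has a zero of multiplicity ≥ t at `c`: `f(x + c) ∈ ⟨x₁,…,xₙ⟩^t`. -/
def HasMultZero {K : Type*} [Field K] {n : ℕ} (t : ℕ) (c : Fin n → K)
    (f : MvPolynomial (Fin n) K) : Prop :=
  MvPolynomial.eval₂Hom MvPolynomial.C
      (fun i => MvPolynomial.X i + MvPolynomial.C (c i)) f ∈
    (Ideal.span (Set.range (MvPolynomial.X : Fin n → MvPolynomial (Fin n) K))) ^ t

open Polynomial in
lemma null_mod_coeff {K : Type*} [Field K] {lam : ℕ} {A : Finset K} (hA : IsNull lam A) :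
    ∀ m c : ℕ, c ≠ m → m ≤ c + lam →
      ((X ^ m) %ₘ (∏ a ∈ A, (X - C a))).coeff c = 0 := by
  set g : K[X] := ∏ a ∈ A, (X - C a) with hgdef
  have hg : g.Monic := monic_prod_of_monic _ _ fun a _ => monic_X_sub_C a
  have hdeg : g.natDegree = A.card := by
    rw [hgdef, natDegree_prod _ _ fun a _ => X_sub_C_ne_zero a]; simp
  intro m
  induction m using Nat.strong_induction_on with
  | _ m ih =>
    intro c hc hcl
    by_cases hm : m < A.card
    · rw [(modByMonic_eq_self_iff hg).2 (by
        rw [degree_X_pow, degree_eq_natDegree hg.ne_zero, hdeg]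
        exact_mod_cast hm)]
      simp [coeff_X_pow, hc]
    · push_neg at hm
      set r : K[X] := X ^ A.card - g with hrdef
      have hrc : ∀ b, b + lam + 1 > A.card → r.coeff b = 0 := by
        intro b hb
        rcases lt_trichotomy b A.card with h | h | h
        · have : g.coeff b = 0 := hA b (by omega) h
          simp [hrdef, coeff_X_pow, this, Nat.ne_of_lt h]
        · subst h
          have : g.coeff A.card = 1 := by
            rw [← hdeg]; exact hg.coeff_natDegree
          simp [hrdef, coeff_X_pow, this]
        · have h1 : g.coeff b = 0 := by
            apply coeff_eq_zero_of_natDegree_lt; omega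
          simp [hrdef, coeff_X_pow, h1, Nat.ne_of_gt h]
      have key : (X:K[X]) ^ m %ₘ g = (X ^ (m - A.card) * r) %ₘ g := by
        have e1 : (X:K[X]) ^ m = X ^ (m - A.card) * r + X ^ (m - A.card) * g := by
          rw [← mul_add, hrdef, sub_add_cancel, ← pow_add, Nat.sub_add_cancel hm]
        rw [e1, add_modByMonic, mul_self_modByMonic hg, add_zero]
      rw [key]
      have e2 : X ^ (m - A.card) * r
          = ∑ b ∈ r.support, r.coeff b • (X:K[X]) ^ (m - A.card + b) := by
        conv_lhs => rw [r.as_sum_support_C_mul_X_pow]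
        rw [Finset.mul_sum]
        refine Finset.sum_congr rfl fun b hb => ?_
        rw [smul_eq_C_mul, pow_add]; ring
      rw [e2]
      have e3 : (∑ b ∈ r.support, r.coeff b • (X:K[X]) ^ (m - A.card + b)) %ₘ g
          = ∑ b ∈ r.support, r.coeff b • ((X:K[X]) ^ (m - A.card + b) %ₘ g) := by
        simp only [← Polynomial.modByMonicHom_apply, map_sum, map_smul]
      rw [e3, finset_sum_coeff]
      refine Finset.sum_eq_zero fun b hb => ?_
      have hbr : r.coeff b ≠ 0 := mem_support_iff.mp hb
      have hblt : b + lam + 1 ≤ A.card := by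
        by_contra h; exact hbr (hrc b (by omega))
      rw [coeff_smul]
      have : ((X:K[X]) ^ (m - A.card + b) %ₘ g).coeff c = 0 := by
        apply ih (m - A.card + b) (by omega) c (by omega) (by omega)
      rw [this, smul_zero]

open Polynomial in
lemma mod_coeff_as_sum {K : Type*} [Field K] [DecidableEq K] (A : Finset K) (c m : ℕ) :
    ((X ^ m) %ₘ (∏ a ∈ A, (X - C a))).coeff c
      = ∑ a ∈ A, (Lagrange.basis A id a).coeff c * a ^ m := by
  set g : K[X] := ∏ a ∈ A, (X - C a) with hgdef
  have hg : g.Monic := monic_prod_of_monic _ _ fun a _ => monic_X_sub_C a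
  have hdeg : g.natDegree = A.card := by
    rw [hgdef, natDegree_prod _ _ fun a _ => X_sub_C_ne_zero a]; simp
  have hd : (X ^ m %ₘ g).degree < (A.card : WithBot ℕ) := by
    rw [← hdeg, ← degree_eq_natDegree hg.ne_zero]
    exact degree_modByMonic_lt _ hg
  have hev : ∀ a ∈ A, (X ^ m %ₘ g).eval (id a) = (fun a : K => a ^ m) a := by
    intro a ha
    have h2 := modByMonic_add_div ((X:K[X]) ^ m) g
    have h3 : eval a g = 0 := by
      rw [hgdef, eval_prod]
      exact Finset.prod_eq_zero ha (by simp)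
    have := congrArg (eval a) h2
    simpa [h3] using this
  have h1 : (X ^ m %ₘ g) = Lagrange.interpolate A id (fun a => a ^ m) :=
    Lagrange.eq_interpolate_of_eval_eq _ Function.injective_id.injOn hd hev
  rw [h1, Lagrange.interpolate_apply, finset_sum_coeff]
  exact Finset.sum_congr rfl fun a ha => by rw [coeff_C_mul, mul_comm]

/-- sum over support equals sum over univ -/
lemma sum_support_eq_sum_univ {n : ℕ} (γ : Fin n →₀ ℕ) :
    ∑ i ∈ γ.support, γ i = ∑ i : Fin n, γ i :=
  Finset.sum_subset (Finset.subset_univ _) fun x _ hx => Finsupp.notMem_support_iff.mp hx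


/-- Structured Nullstellensatz for punctured grids. -/
theorem stmt_13 {K : Type*} [Field K] {n : ℕ} (lam : ℕ) (X Y : Fin n → Finset K)
    (hYX : ∀ i, Y i ⊆ X i)
    (hnullX : ∀ i, IsNull lam (X i)) (hnullY : ∀ i, IsNull lam (Y i))
    (f : MvPolynomial (Fin n) K) (α : Fin n →₀ ℕ) (hα : α ∈ f.support)
    (h1 : ∀ i, α i < (X i).card)
    (h2 : ∃ i, α i + (Y i).card < (X i).card)
    (hdeg : f.totalDegree ≤ (∑ i, α i) + lam) :
    ∃ z : Fin n → K, (∀ i, z i ∈ X i) ∧ ¬ (∀ i, z i ∈ Y i) ∧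
      MvPolynomial.eval z f ≠ 0 := by
  classical
  by_contra hcon
  push_neg at hcon
  obtain ⟨i₀, hi₀⟩ := h2
  have hfα : MvPolynomial.coeff α f ≠ 0 := MvPolynomial.mem_support_iff.mp hα
  set q : ℕ := (Y i₀).card with hq
  set H : MvPolynomial (Fin n) K := ∏ a ∈ Y i₀, (MvPolynomial.X i₀ - MvPolynomial.C a)
    with hH
  set F : MvPolynomial (Fin n) K := f * H with hF
  set β : Fin n →₀ ℕ := α + Finsupp.single i₀ q with hβdef
  have hβapp : ∀ j, β j = α j + if i₀ = j then q else 0 := by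
    intro j; simp [hβdef, Finsupp.single_apply]
  have hβi₀ : β i₀ = α i₀ + q := by simp [hβapp]
  have hβne : ∀ j, j ≠ i₀ → β j = α j := by
    intro j hj; simp [hβapp, (Ne.symm hj : ¬ i₀ = j)]
  have hβlt : ∀ j, β j < (X j).card := by
    intro j
    by_cases h : j = i₀
    · subst h; rw [hβi₀]; exact hi₀
    · rw [hβne j h]; exact h1 j
  -- F vanishes on the grid
  have hFvanish : ∀ z : Fin n → K, (∀ i, z i ∈ X i) → MvPolynomial.eval z F = 0 := by
    intro z hz
    rw [hF, map_mul]
    by_cases hzY : ∀ i, z i ∈ Y i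
    · have : MvPolynomial.eval z H = 0 := by
        rw [hH, map_prod]
        exact Finset.prod_eq_zero (hzY i₀) (by simp)
      rw [this, mul_zero]
    · rw [hcon z hz (not_forall.mp hzY), zero_mul]
  -- degree bound
  have hsumβ : ∑ j, β j = (∑ j, α j) + q := by
    simp [hβapp, Finset.sum_add_distrib]
  have hdegH : H.totalDegree ≤ q := by
    refine le_trans (MvPolynomial.totalDegree_finset_prod _ _) ?_
    calc ∑ a ∈ Y i₀, (MvPolynomial.X i₀ - MvPolynomial.C a).totalDegree
        ≤ ∑ a ∈ Y i₀, 1 := by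
          refine Finset.sum_le_sum fun a _ => ?_
          rw [sub_eq_add_neg, ← MvPolynomial.C_neg]
          refine le_trans (MvPolynomial.totalDegree_add _ _) ?_
          simp [MvPolynomial.totalDegree_X, MvPolynomial.totalDegree_C]
      _ = q := by simp [hq]
  have hdegF : F.totalDegree ≤ (∑ j, β j) + lam := by
    calc F.totalDegree ≤ f.totalDegree + H.totalDegree := MvPolynomial.totalDegree_mul _ _
      _ ≤ ((∑ j, α j) + lam) + q := add_le_add hdeg hdegH
      _ = (∑ j, β j) + lam := by rw [hsumβ]; ring
  -- the coefficient of β in F is the coefficient of α in f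
  set hYp : Polynomial K := ∏ a ∈ Y i₀, (Polynomial.X - Polynomial.C a) with hYpdef
  have hYmonic : hYp.Monic :=
    Polynomial.monic_prod_of_monic _ _ fun a _ => Polynomial.monic_X_sub_C a
  have hYdeg : hYp.natDegree = q := by
    rw [hYpdef, Polynomial.natDegree_prod _ _ fun a _ => Polynomial.X_sub_C_ne_zero a]; simp [hq]
  have hHsum : H = ∑ k ∈ Finset.range (q + 1),
      MvPolynomial.monomial (Finsupp.single i₀ k) (hYp.coeff k) := by
    have e1 : H = Polynomial.eval₂ MvPolynomial.C (MvPolynomial.X i₀) hYp := by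
      rw [hH, hYpdef]
      have := map_prod (Polynomial.eval₂RingHom (MvPolynomial.C (σ := Fin n) (R := K))
        (MvPolynomial.X i₀)) (fun a => Polynomial.X - Polynomial.C a) (Y i₀)
      simp only [Polynomial.coe_eval₂RingHom, Polynomial.eval₂_sub, Polynomial.eval₂_X,
        Polynomial.eval₂_C] at this
      exact this.symm
    rw [e1, Polynomial.eval₂_eq_sum_range, hYdeg]
    exact Finset.sum_congr rfl fun k _ => MvPolynomial.C_mul_X_pow_eq_monomial
  have hcoeffβ : MvPolynomial.coeff β F = MvPolynomial.coeff α f := by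
    rw [hF, hHsum, Finset.mul_sum, MvPolynomial.coeff_sum]
    rw [Finset.sum_eq_single q]
    · rw [MvPolynomial.coeff_mul_monomial']
      have hle : Finsupp.single i₀ q ≤ β := by rw [hβdef]; exact le_add_self
      rw [if_pos hle, hβdef, add_tsub_cancel_right]
      have : hYp.coeff q = 1 := by rw [← hYdeg]; exact hYmonic.coeff_natDegree
      rw [this, mul_one]
    · intro k hk hkq
      have hklt : k < q := by
        have := Finset.mem_range.mp hk; omega
      rw [MvPolynomial.coeff_mul_monomial']
      split_ifs with h
      · by_cases hknull : q - lam ≤ k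
        · have : hYp.coeff k = 0 := hnullY i₀ k hknull hklt
          rw [this, mul_zero]
        · have hco : MvPolynomial.coeff (β - Finsupp.single i₀ k) f = 0 := by
            apply MvPolynomial.coeff_eq_zero_of_totalDegree_lt
            rw [sum_support_eq_sum_univ]
            have hval : ∀ i, (β - Finsupp.single i₀ k) i
                = β i - (if i₀ = i then k else 0) := by
              intro i; rw [Finsupp.tsub_apply, Finsupp.single_apply]
            have hsum2 : ∑ i, (β - Finsupp.single i₀ k) i = (∑ i, β i) - k := by
              simp only [hval]
              rw [Finset.sum_eq_add_sum_sdiff_singleton_of_mem (Finset.mem_univ i₀)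
                  (fun i => β i - if i₀ = i then k else 0),
                Finset.sum_eq_add_sum_sdiff_singleton_of_mem (Finset.mem_univ i₀) (fun i => β i)]
              have h1' : ∑ i ∈ Finset.univ \ {i₀}, (β i - if i₀ = i then k else 0)
                  = ∑ i ∈ Finset.univ \ {i₀}, β i := by
                refine Finset.sum_congr rfl fun i hi => ?_
                have hne : ¬ i₀ = i := by
                  intro hh
                  subst hh
                  simp at hi
                simp [hne]
              rw [h1']
              have hkβ : k ≤ β i₀ := by rw [hβi₀]; omega
              have hif : (if i₀ = i₀ then k else 0) = k := if_pos rfl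
              rw [hif]
              omega
            rw [hsum2, hsumβ]
            omega
          rw [hco, zero_mul]
      · rfl
    · intro h; exact absurd (Finset.self_mem_range_succ q) h
  -- the evaluation functional
  set g : Fin n → Polynomial K := fun j => ∏ a ∈ X j, (Polynomial.X - Polynomial.C a)
    with hgdef
  set r : Fin n → ℕ → K := fun j m => ((Polynomial.X ^ m %ₘ g j)).coeff (β j) with hrdef
  set w : Fin n → K → K := fun j a => (Lagrange.basis (X j) id a).coeff (β j) with hwdef
  have hr_sum : ∀ j m, r j m = ∑ a ∈ X j, w j a * a ^ m := fun j m =>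
    mod_coeff_as_sum (X j) (β j) m
  have hLzero : ∑ γ ∈ F.support, MvPolynomial.coeff γ F * ∏ j, r j (γ j) = 0 := by
    calc ∑ γ ∈ F.support, MvPolynomial.coeff γ F * ∏ j, r j (γ j)
        = ∑ γ ∈ F.support, MvPolynomial.coeff γ F *
            ∑ z ∈ Fintype.piFinset X, ∏ j, (w j (z j) * (z j) ^ (γ j)) := by
          refine Finset.sum_congr rfl fun γ _ => ?_
          congr 1
          simp_rw [hr_sum]
          exact Finset.prod_univ_sum X fun j a => w j a * a ^ γ j
      _ = ∑ z ∈ Fintype.piFinset X, (∏ j, w j (z j)) *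
            ∑ γ ∈ F.support, MvPolynomial.coeff γ F * ∏ j, (z j) ^ (γ j) := by
          simp_rw [Finset.mul_sum]
          rw [Finset.sum_comm]
          refine Finset.sum_congr rfl fun z _ => ?_
          refine Finset.sum_congr rfl fun γ _ => ?_
          rw [Finset.prod_mul_distrib]; ring
      _ = 0 := by
          refine Finset.sum_eq_zero fun z hz => ?_
          have hzX : ∀ i, z i ∈ X i := by
            simpa [Fintype.mem_piFinset] using hz
          rw [← MvPolynomial.eval_eq', hFvanish z hzX, mul_zero]
  have hβF : β ∈ F.support := MvPolynomial.mem_support_iff.mpr (by rw [hcoeffβ]; exact hfα)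
  have hLval : ∑ γ ∈ F.support, MvPolynomial.coeff γ F * ∏ j, r j (γ j)
      = MvPolynomial.coeff α f := by
    rw [Finset.sum_eq_single_of_mem β hβF]
    · rw [hcoeffβ]
      have hone : ∀ j, r j (β j) = 1 := by
        intro j
        rw [hrdef]
        simp only
        rw [(Polynomial.modByMonic_eq_self_iff
          (Polynomial.monic_prod_of_monic _ _ fun a _ => Polynomial.monic_X_sub_C a)).2 ?_]
        · simp [Polynomial.coeff_X_pow]
        · rw [Polynomial.degree_X_pow]
          have hdg : (g j).natDegree = (X j).card := by
            rw [hgdef, Polynomial.natDegree_prod _ _ fun a _ => Polynomial.X_sub_C_ne_zero a]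
            simp
          rw [Polynomial.degree_eq_natDegree (Polynomial.Monic.ne_zero
            (Polynomial.monic_prod_of_monic _ _ fun a _ => Polynomial.monic_X_sub_C a)), hdg]
          exact_mod_cast hβlt j
      rw [Finset.prod_congr rfl fun j _ => hone j, Finset.prod_const_one, mul_one]
    · intro γ hγ hne
      have hprod : ∏ j, r j (γ j) = 0 := by
        by_contra hp
        have hj : ∀ j, γ j = β j ∨ β j + lam + 1 ≤ γ j := by
          intro j
          have hrj : r j (γ j) ≠ 0 := fun h =>
            hp (Finset.prod_eq_zero (Finset.mem_univ j) h)
          by_contra hcj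
          push_neg at hcj
          exact hrj (null_mod_coeff (hnullX j) (γ j) (β j)
            (fun hh => hcj.1 hh.symm) (by omega))
        obtain ⟨j₀, hj₀⟩ : ∃ j, γ j ≠ β j := by
          by_contra hall
          push_neg at hall
          exact hne (Finsupp.ext hall)
        have hβγ : ∀ j, β j ≤ γ j := by
          intro j; rcases hj j with h | h <;> omega
        have hsum1 : (∑ j, β j) + lam + 1 ≤ ∑ j, γ j := by
          have hb := Finset.sum_eq_add_sum_sdiff_singleton_of_mem (Finset.mem_univ j₀)
            (fun j => β j)
          have hg2 := Finset.sum_eq_add_sum_sdiff_singleton_of_mem (Finset.mem_univ j₀)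
            (fun j => γ j)
          have hle : ∑ j ∈ Finset.univ \ {j₀}, β j ≤ ∑ j ∈ Finset.univ \ {j₀}, γ j :=
            Finset.sum_le_sum fun j _ => hβγ j
          have hj₀' : β j₀ + lam + 1 ≤ γ j₀ := by
            rcases hj j₀ with h | h
            · exact absurd h hj₀
            · exact h
          omega
        have hsum2 : ∑ j, γ j ≤ F.totalDegree := by
          rw [← sum_support_eq_sum_univ]
          exact MvPolynomial.le_totalDegree hγ
        omega
      rw [hprod, mul_zero]
  rw [hLval] at hLzero
  exact hfα hLzero
end

section
/- Let K be a field, X ⊆ Kⁿ finite, and f ∈ K[x₁,…,xₙ]. Fix an admissible monomial ordering. Then |X \ V(f)| = |N(I(X)) \ N(I(X) + ⟨f⟩)|, where for an ideal J, N(J) denotes the set of monomials not divisible by the leading monomial of any element of J. -/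
section Clark

open MvPolynomial

variable {K : Type*} [Field K] {n : ℕ} {ord : LinearOrder (Fin n →₀ ℕ)}

lemma olt_of_le_of_ne {a b : Fin n →₀ ℕ} (h : ord.le a b) (hne : a ≠ b) : ord.lt a b := by
  rw [ord.lt_iff_le_not_ge]
  exact ⟨h, fun h' => hne (ord.le_antisymm _ _ h h')⟩

lemma not_le_of_olt {a b : Fin n →₀ ℕ} (h : ord.lt a b) : ¬ ord.le b a :=
  ((ord.lt_iff_le_not_ge _ _).mp h).2

lemma ord_wf (hadm : Admissible ord) : WellFounded ord.lt := by
  rw [RelEmbedding.wellFounded_iff_isEmpty]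
  constructor
  intro f
  obtain ⟨m, k, hmk, hle⟩ := (Set.isPWO_of_wellQuasiOrderedLE (Set.univ : Set (Fin n →₀ ℕ))).exists_lt
    (f := fun i => f i) (fun _ => trivial)
  have h1 : ord.le (f m) (f k) := hadm.2 _ _ (Finsupp.le_def.mp hle)
  have h2 : ord.lt (f k) (f m) := f.map_rel_iff.mpr hmk
  exact not_le_of_olt h2 h1

lemma leadExp_mem {g : MvPolynomial (Fin n) K} (hg : g ≠ 0) :
    leadExp ord g hg ∈ g.support := @Finset.max'_mem _ ord _ _

lemma le_leadExp {g : MvPolynomial (Fin n) K} (hg : g ≠ 0) {α : Fin n →₀ ℕ}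
    (hα : α ∈ g.support) : ord.le α (leadExp ord g hg) :=
  @Finset.le_max' _ ord _ _ hα

lemma leadExp_not_mem {J : Ideal (MvPolynomial (Fin n) K)} {g : MvPolynomial (Fin n) K}
    (hgJ : g ∈ J) (hg : g ≠ 0) : leadExp ord g hg ∉ stdMon ord J :=
  fun h => h g hgJ hg (fun _ => le_rfl)

lemma stdMon_anti {J J' : Ideal (MvPolynomial (Fin n) K)} (h : J ≤ J') :
    stdMon ord J' ⊆ stdMon ord J :=
  fun _ hα g hg hg0 => hα g (h hg) hg0

lemma reduce (hadm : Admissible ord) (J : Ideal (MvPolynomial (Fin n) K)) :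
    ∀ (t : Fin n →₀ ℕ) (p : MvPolynomial (Fin n) K), (∀ α ∈ p.support, ord.le α t) →
      ∃ q : MvPolynomial (Fin n) K, (∀ α ∈ q.support, α ∈ stdMon ord J) ∧ p - q ∈ J := by
  intro t
  refine WellFounded.induction (C := fun t => ∀ p : MvPolynomial (Fin n) K,
    (∀ α ∈ p.support, ord.le α t) →
    ∃ q : MvPolynomial (Fin n) K, (∀ α ∈ q.support, α ∈ stdMon ord J) ∧ p - q ∈ J)
    (ord_wf hadm) t ?_
  clear t
  intro t IH p hp
  by_cases hp0 : p = 0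
  · exact ⟨0, by simp, by simp [hp0]⟩
  by_cases htp : leadExp ord p hp0 = t
  case neg =>
    exact IH _ (olt_of_le_of_ne (hp _ (leadExp_mem hp0)) htp) p
      (fun α hα => le_leadExp hp0 hα)
  by_cases hstd : t ∈ stdMon ord J
  · -- leading exponent is standard; strip the leading term
    set c := coeff t p with hc
    set h := p - monomial t c with hh
    have hcoefft : coeff t h = 0 := by
      simp [hh, coeff_monomial, hc]
    have hsupp : ∀ α ∈ h.support, ord.le α t ∧ α ≠ t := by
      intro α hα
      have hne : α ≠ t := fun he => by
        rw [he] at hα; exact (mem_support_iff.mp hα) hcoefft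
      refine ⟨?_, hne⟩
      have : coeff α h = coeff α p := by
        simp [hh, coeff_monomial, Ne.symm hne]
      have : α ∈ p.support := by
        rw [mem_support_iff, ← this]; exact mem_support_iff.mp hα
      exact hp α this
    by_cases hh0 : h = 0
    · refine ⟨monomial t c, ?_, ?_⟩
      · intro α hα
        have : α = t := by
          by_contra hne
          exact mem_support_iff.mp hα (by simp [coeff_monomial, Ne.symm hne])
        rwa [this]
      · have : p - monomial t c = h := rfl
        rw [this, hh0]; exact J.zero_mem
    · obtain ⟨q', hq'std, hq'J⟩ := IH (leadExp ord h hh0)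
        (olt_of_le_of_ne (hsupp _ (leadExp_mem hh0)).1 (hsupp _ (leadExp_mem hh0)).2)
        h (fun α hα => le_leadExp hh0 hα)
      refine ⟨q' + monomial t c, ?_, ?_⟩
      · intro α hα
        rcases Finset.mem_union.mp (MvPolynomial.support_add hα) with h1 | h1
        · exact hq'std α h1
        · have : α = t := by
            by_contra hne
            exact mem_support_iff.mp h1 (by simp [coeff_monomial, Ne.symm hne])
          rwa [this]
      · have : p - (q' + monomial t c) = h - q' := by rw [hh]; ring
        rw [this]; exact hq'J
  · -- leading exponent not standard; reduce by an element of J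
    have : ∃ g ∈ J, ∃ hg : g ≠ 0, ∀ i, leadExp ord g hg i ≤ t i := by
      simpa [stdMon, not_forall, not_not] using hstd
    obtain ⟨g, hgJ, hg0, hdiv⟩ := this
    set β := leadExp ord g hg0 with hβ
    have hβt : β ≤ t := Finsupp.le_def.mpr hdiv
    set γ := t - β with hγ
    have hγt : γ ≤ t := tsub_le_self
    have hgβ : coeff β g ≠ 0 := mem_support_iff.mp (leadExp_mem hg0)
    set c := coeff t p * (coeff β g)⁻¹ with hc
    set m := monomial γ c * g with hm
    have hmJ : m ∈ J := J.mul_mem_left _ hgJ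
    have hcm : coeff t m = coeff t p := by
      rw [hm, coeff_monomial_mul', if_pos hγt, hγ, tsub_tsub_cancel_of_le hβt, hc,
        mul_assoc, inv_mul_cancel₀ hgβ, mul_one]
    set h := p - m with hh
    have hcoefft : coeff t h = 0 := by simp [hh, coeff_sub, hcm]
    have hsupp : ∀ α ∈ h.support, ord.le α t ∧ α ≠ t := by
      intro α hα
      have hne : α ≠ t := fun he => by
        rw [he] at hα; exact (mem_support_iff.mp hα) hcoefft
      refine ⟨?_, hne⟩
      by_cases hαp : α ∈ p.support
      · exact hp α hαp
      · have hαm : coeff α m ≠ 0 := by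
          intro h0
          exact mem_support_iff.mp hα (by simp [hh, coeff_sub, h0,
            notMem_support_iff.mp hαp])
        rw [hm, coeff_monomial_mul'] at hαm
        by_cases hγα : γ ≤ α
        · rw [if_pos hγα] at hαm
          have hmem : α - γ ∈ g.support := by
            rw [mem_support_iff]
            intro h0
            exact hαm (by rw [h0, mul_zero])
          have h1 : ord.le (α - γ) β := le_leadExp hg0 hmem
          have h2 : ord.le ((α - γ) + γ) (β + γ) := hadm.1 _ _ _ h1
          rwa [tsub_add_cancel_of_le hγα, hγ, add_tsub_cancel_of_le hβt] at h2
        · rw [if_neg hγα] at hαm; exact absurd rfl hαm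
    by_cases hh0 : h = 0
    · refine ⟨0, by simp, ?_⟩
      have : p = m := by rwa [hh, sub_eq_zero] at hh0
      rw [sub_zero, this]; exact hmJ
    · obtain ⟨q', hq'std, hq'J⟩ := IH (leadExp ord h hh0)
        (olt_of_le_of_ne (hsupp _ (leadExp_mem hh0)).1 (hsupp _ (leadExp_mem hh0)).2)
        h (fun α hα => le_leadExp hh0 hα)
      refine ⟨q', hq'std, ?_⟩
      have : p - q' = (h - q') + m := by rw [hh]; ring
      rw [this]
      exact J.add_mem hq'J hmJ

end Clark
section Clark2

open MvPolynomial

variable {K : Type*} [Field K] {n : ℕ} [DecidableEq (Fin n → K)]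

/-- A polynomial vanishing at `y` but not at `x` (when `x ≠ y`). -/
noncomputable def indicatorPoly (x y : Fin n → K) : MvPolynomial (Fin n) K :=
  @dite _ (∃ i, x i ≠ y i) (Classical.propDecidable _)
    (fun h => MvPolynomial.C ((x h.choose - y h.choose)⁻¹) *
      (MvPolynomial.X h.choose - MvPolynomial.C (y h.choose)))
    (fun _ => 1)

lemma eval_indicatorPoly_self {x y : Fin n → K} (h : x ≠ y) :
    MvPolynomial.eval x (indicatorPoly x y) = 1 := by
  have h' : ∃ i, x i ≠ y i := Function.ne_iff.mp h
  rw [indicatorPoly, dif_pos h']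
  simp only [map_mul, eval_C, map_sub, eval_X]
  exact inv_mul_cancel₀ (sub_ne_zero.mpr h'.choose_spec)

lemma eval_indicatorPoly_other {x y : Fin n → K} (h : x ≠ y) :
    MvPolynomial.eval y (indicatorPoly x y) = 0 := by
  have h' : ∃ i, x i ≠ y i := Function.ne_iff.mp h
  rw [indicatorPoly, dif_pos h']
  simp

/-- Indicator of the point `x` within `X`. -/
noncomputable def indic (X : Finset (Fin n → K)) (x : Fin n → K) : MvPolynomial (Fin n) K :=
  ∏ y ∈ X.erase x, indicatorPoly x y

lemma eval_indic_self (X : Finset (Fin n → K)) (x : Fin n → K) :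
    MvPolynomial.eval x (indic X x) = 1 := by
  rw [indic, map_prod]
  refine Finset.prod_eq_one fun y hy => ?_
  exact eval_indicatorPoly_self (Ne.symm (Finset.ne_of_mem_erase hy))

lemma eval_indic_other (X : Finset (Fin n → K)) {x z : Fin n → K} (hz : z ∈ X)
    (hne : z ≠ x) : MvPolynomial.eval z (indic X x) = 0 := by
  rw [indic, map_prod]
  refine Finset.prod_eq_zero (Finset.mem_erase.mpr ⟨hne, hz⟩) ?_
  exact eval_indicatorPoly_other (Ne.symm hne)

lemma exists_interpolation (X : Finset (Fin n → K)) (φ : (Fin n → K) → K) :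
    ∃ p : MvPolynomial (Fin n) K, ∀ x ∈ X, MvPolynomial.eval x p = φ x := by
  refine ⟨∑ x ∈ X, MvPolynomial.C (φ x) * indic X x, fun z hz => ?_⟩
  rw [map_sum, Finset.sum_eq_single z]
  · simp [eval_indic_self]
  · intro x hx hne
    simp [eval_indic_other X hz (Ne.symm hne)]
  · intro h; exact absurd hz h

lemma mem_vanishingIdealOn {X : Set (Fin n → K)} {g : MvPolynomial (Fin n) K} :
    g ∈ vanishingIdealOn X ↔ ∀ x ∈ X, MvPolynomial.eval x g = 0 := Iff.rfl

lemma vanishingIdealOn_anti {X Y : Set (Fin n → K)} (h : Y ⊆ X) :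
    vanishingIdealOn X ≤ vanishingIdealOn Y :=
  fun _ hg x hx => hg x (h hx)

lemma finitesatz (X : Finset (Fin n → K)) (f : MvPolynomial (Fin n) K)
    [DecidablePred fun x : Fin n → K => MvPolynomial.eval x f = 0] :
    vanishingIdealOn (↑(X.filter fun x => MvPolynomial.eval x f = 0) : Set (Fin n → K)) =
      vanishingIdealOn (X : Set (Fin n → K)) + Ideal.span {f} := by
  apply le_antisymm
  · intro g hg
    set h := ∑ x ∈ X.filter fun x => MvPolynomial.eval x f ≠ 0,
      MvPolynomial.C (MvPolynomial.eval x g / MvPolynomial.eval x f) * indic X x with hh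
    have hsplit : g = (g - h * f) + h * f := by ring
    rw [hsplit]
    apply Submodule.add_mem
    · apply Ideal.mem_sup_left
      intro x hx
      have hxX : x ∈ X := Finset.mem_coe.mp hx
      simp only [map_sub, map_mul]
      by_cases hfx : MvPolynomial.eval x f = 0
      · have hgx : MvPolynomial.eval x g = 0 :=
          hg x (Finset.mem_coe.mpr (Finset.mem_filter.mpr ⟨hxX, hfx⟩))
        rw [hgx, hfx, mul_zero, sub_zero]
      · have hhx : MvPolynomial.eval x h = MvPolynomial.eval x g / MvPolynomial.eval x f := by
          rw [hh, map_sum, Finset.sum_eq_single x]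
          · simp [eval_indic_self]
          · intro z hz hne
            simp only [map_mul, eval_C]
            rw [eval_indic_other X hxX (Ne.symm hne), mul_zero]
          · intro hxx
            exact absurd (Finset.mem_filter.mpr ⟨hxX, hfx⟩) hxx
        rw [hhx, div_mul_cancel₀ _ hfx, sub_self]
    · apply Ideal.mem_sup_right
      exact Ideal.mul_mem_left _ _ (Ideal.subset_span rfl)
  · rw [Submodule.add_eq_sup]
    apply sup_le
    · exact vanishingIdealOn_anti (by
        intro x hx
        exact Finset.mem_coe.mpr (Finset.mem_of_mem_filter _ (Finset.mem_coe.mp hx)))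
    · rw [Ideal.span_le]
      intro g hgf
      rw [Set.mem_singleton_iff] at hgf
      subst hgf
      intro x hx
      exact (Finset.mem_filter.mp (Finset.mem_coe.mp hx)).2

end Clark2
section Clark3

open MvPolynomial

variable {K : Type*} [Field K] {n : ℕ} {ord : LinearOrder (Fin n →₀ ℕ)}

lemma card_stdMon [DecidableEq (Fin n → K)] (hadm : Admissible ord) (X : Finset (Fin n → K)) :
    (stdMon ord (vanishingIdealOn (X : Set (Fin n → K)))).Finite ∧
    (stdMon ord (vanishingIdealOn (X : Set (Fin n → K)))).ncard = X.card := by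
  classical
  set J := vanishingIdealOn (X : Set (Fin n → K)) with hJ
  set N := stdMon ord J with hN
  set v : N → (↥X → K) := fun α x =>
    MvPolynomial.eval (x : Fin n → K) (monomial (α : Fin n →₀ ℕ) (1 : K)) with hv
  have hli : LinearIndependent K v := by
    rw [linearIndependent_iff]
    intro l hl
    set g : MvPolynomial (Fin n) K := ∑ α ∈ l.support, monomial (α : Fin n →₀ ℕ) (l α) with hg
    have hcoeff : ∀ α : N, coeff (α : Fin n →₀ ℕ) g = l α := by
      intro α
      rw [hg, coeff_sum]
      have hc : ∀ β ∈ l.support, coeff (α : Fin n →₀ ℕ) (monomial (β : Fin n →₀ ℕ) (l β))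
          = if β = α then l β else 0 := by
        intro β _
        rw [coeff_monomial]
        by_cases h : β = α
        · simp [h]
        · rw [if_neg (fun hc => h (Subtype.ext hc)), if_neg h]
      rw [Finset.sum_congr rfl hc, Finset.sum_ite_eq' l.support α]
      by_cases hα : α ∈ l.support
      · rw [if_pos hα]
      · rw [if_neg hα, Finsupp.notMem_support_iff.mp hα]
    have hgJ : g ∈ J := by
      intro x hx
      have h0 : (Finsupp.linearCombination K v l) ⟨x, hx⟩ = 0 := by rw [hl]; rfl
      rw [Finsupp.linearCombination_apply, Finsupp.sum, Finset.sum_apply] at h0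
      rw [hg, map_sum, ← h0]
      refine Finset.sum_congr rfl fun α _ => ?_
      simp [hv, eval_monomial, smul_eq_mul]
    have hg0 : g = 0 := by
      by_contra hg0
      have hsup : ∀ β ∈ g.support, β ∈ N := by
        intro β hβ
        by_contra hβN
        apply mem_support_iff.mp hβ
        rw [hg, coeff_sum]
        apply Finset.sum_eq_zero
        intro α _
        rw [coeff_monomial, if_neg]
        intro hceq
        exact hβN (hceq ▸ α.2)
      exact leadExp_not_mem hgJ hg0 (hsup _ (leadExp_mem hg0))
    ext α
    rw [← hcoeff α, hg0, coeff_zero]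
    rfl
  have hsp : ⊤ ≤ Submodule.span K (Set.range v) := by
    intro φ _
    obtain ⟨p, hp⟩ := exists_interpolation X (fun z => if h : z ∈ X then φ ⟨z, h⟩ else 0)
    have hred : ∃ q : MvPolynomial (Fin n) K,
        (∀ α ∈ q.support, α ∈ stdMon ord J) ∧ p - q ∈ J := by
      by_cases hp0 : p = 0
      · exact reduce hadm J 0 p (by simp [hp0])
      · exact reduce hadm J (leadExp ord p hp0) p (fun α hα => le_leadExp hp0 hα)
    obtain ⟨q, hqN, hqJ⟩ := hred
    have heval : ∀ x : ↥X, MvPolynomial.eval (x : Fin n → K) q = φ x := by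
      intro x
      have h1 : MvPolynomial.eval (x : Fin n → K) (p - q) = 0 := hqJ x x.2
      rw [map_sub, sub_eq_zero] at h1
      have h2 := hp x x.2
      rw [dif_pos x.2] at h2
      rw [← h1, h2]
    have hφ : φ = ∑ β ∈ q.support.attach,
        coeff (β : Fin n →₀ ℕ) q • v ⟨(β : Fin n →₀ ℕ), hqN _ β.2⟩ := by
      funext x
      rw [← heval x]
      conv_lhs => rw [q.as_sum]
      rw [map_sum, Finset.sum_apply]
      rw [← Finset.sum_attach q.support (fun β => MvPolynomial.eval (x : Fin n → K) (monomial β (coeff β q)))]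
      refine Finset.sum_congr rfl fun β _ => ?_
      simp [hv, eval_monomial, smul_eq_mul]
    rw [hφ]
    refine Submodule.sum_mem _ fun β _ => ?_
    exact Submodule.smul_mem _ _ (Submodule.subset_span ⟨_, rfl⟩)
  let b : Module.Basis N K (↥X → K) := Module.Basis.mk hli hsp
  let e : N ≃ ↥X := b.indexEquiv (Pi.basisFun K ↥X)
  have hfinN : Finite ↥N := Finite.of_equiv ↥X e.symm
  refine ⟨Set.finite_coe_iff.mp hfinN, ?_⟩
  rw [← Nat.card_coe_set_eq, Nat.card_congr e, Nat.card_eq_fintype_card, Fintype.card_coe]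

end Clark3
/-- Clark's formula. -/
theorem stmt_15 {K : Type*} [Field K] {n : ℕ}
    (ord : LinearOrder (Fin n →₀ ℕ)) (hadm : Admissible ord)
    (X : Finset (Fin n → K)) (f : MvPolynomial (Fin n) K) :
    {x : Fin n → K | x ∈ X ∧ MvPolynomial.eval x f ≠ 0}.ncard =
      (stdMon ord (vanishingIdealOn (X : Set (Fin n → K))) \
        stdMon ord (vanishingIdealOn (X : Set (Fin n → K)) +
          Ideal.span {f})).ncard := by
  classical
  set Y := X.filter fun x => MvPolynomial.eval x f = 0 with hY
  rw [← finitesatz X f]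
  obtain ⟨hfin1, hcard1⟩ := card_stdMon (ord := ord) hadm X
  obtain ⟨hfin2, hcard2⟩ := card_stdMon (ord := ord) hadm Y
  have hsub : stdMon ord (vanishingIdealOn (Y : Set (Fin n → K))) ⊆
      stdMon ord (vanishingIdealOn (X : Set (Fin n → K))) :=
    stdMon_anti (vanishingIdealOn_anti (by
      intro x hx
      exact Finset.mem_coe.mpr (Finset.mem_of_mem_filter _ (Finset.mem_coe.mp hx))))
  rw [Set.ncard_diff hsub hfin2, hcard1, hcard2]
  have hset : {x : Fin n → K | x ∈ X ∧ MvPolynomial.eval x f ≠ 0} =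
      ↑(X.filter fun x => MvPolynomial.eval x f ≠ 0) := by
    ext x
    simp [Finset.mem_filter]
  rw [hset, Set.ncard_coe_finset]
  have harith := Finset.card_filter_add_card_filter_not
    (s := X) (p := fun x => MvPolynomial.eval x f = 0)
  have hfilter : (X.filter fun x => ¬ MvPolynomial.eval x f = 0) =
      (X.filter fun x => MvPolynomial.eval x f ≠ 0) := by
    simp [ne_eq]
  rw [hfilter, ← hY] at harith
  omega
end

section
/- Let K be a field, X ⊆ Kⁿ finite, f ∈ K[x₁,…,xₙ], and let g ≠ 0 be an element of I(X) + ⟨f⟩. Then the number of points of X where f does not vanish is at least the number of standard monomials of I(X) that are divisible by the leading monomial of g. -/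
namespace ClarkAux

variable {K : Type*} [Field K] {n : ℕ}

lemma mem_vanishingIdealOn {S : Set (Fin n → K)} {p : MvPolynomial (Fin n) K} :
    p ∈ vanishingIdealOn S ↔ ∀ x ∈ S, MvPolynomial.eval x p = 0 := Iff.rfl

variable (ord : LinearOrder (Fin n →₀ ℕ))

lemma leadExp_mem {g : MvPolynomial (Fin n) K} (hg : g ≠ 0) :
    leadExp ord g hg ∈ g.support :=
  @Finset.max'_mem _ ord _ _

lemma le_leadExp {g : MvPolynomial (Fin n) K} (hg : g ≠ 0) {ν : Fin n →₀ ℕ}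
    (hν : ν ∈ g.support) : ord.le ν (leadExp ord g hg) :=
  @Finset.le_max' _ ord _ _ hν

lemma ord_wf (hadm : Admissible ord) : WellFounded ord.lt := by
  rw [RelEmbedding.wellFounded_iff_isEmpty]
  constructor
  intro e
  obtain ⟨m, k, hmk, hle⟩ :=
    Set.isPWO_of_wellQuasiOrderedLE (Set.univ : Set (Fin n →₀ ℕ)) (fun i => ⟨e i, Set.mem_univ _⟩)
  have h1 : ord.le (e m) (e k) := hadm.2 _ _ fun i => Finsupp.le_def.mp hle i
  have h2 : ord.lt (e k) (e m) := e.map_rel_iff.mpr hmk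
  exact ((ord.lt_iff_le_not_ge _ _).mp h2).2 h1

/-- The function on points given by a monomial. -/
noncomputable def mfun (Z : Finset (Fin n → K)) (β : Fin n →₀ ℕ) : {x // x ∈ Z} → K :=
  fun x => MvPolynomial.eval x.1 (MvPolynomial.monomial β 1)

lemma mfun_linearIndependent (X : Finset (Fin n → K)) :
    LinearIndependent K (fun α : stdMon ord (vanishingIdealOn (X : Set (Fin n → K))) =>
      mfun X α.1) := by
  classical
  rw [linearIndependent_iff]
  intro l hl
  by_contra hlne
  set p : MvPolynomial (Fin n) K :=
    ∑ α ∈ l.support, MvPolynomial.monomial (α.1 : Fin n →₀ ℕ) (l α) with hp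
  have hco : ∀ α ∈ l.support, p.coeff α.1 = l α := by
    intro α hα
    rw [hp, MvPolynomial.coeff_sum, Finset.sum_eq_single α]
    · simp [MvPolynomial.coeff_monomial]
    · intro b _ hne
      rw [MvPolynomial.coeff_monomial, if_neg fun h => hne (Subtype.ext h)]
    · intro h; exact absurd hα h
  have hsupp : p.support ⊆ l.support.image (fun α => (α.1 : Fin n →₀ ℕ)) := by
    intro β hβ
    rw [MvPolynomial.mem_support_iff] at hβ
    by_contra hβ'
    apply hβ
    rw [hp, MvPolynomial.coeff_sum]
    refine Finset.sum_eq_zero fun α hα => ?_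
    rw [MvPolynomial.coeff_monomial, if_neg fun h => hβ' (Finset.mem_image.mpr ⟨α, hα, h⟩)]
  obtain ⟨α₀, hα₀⟩ := Finsupp.ne_iff.mp hlne
  have hα₀s : α₀ ∈ l.support := Finsupp.mem_support_iff.mpr (by simpa using hα₀)
  have hpne : p ≠ 0 := by
    intro h
    have h2 := hco α₀ hα₀s
    rw [h, MvPolynomial.coeff_zero] at h2
    exact (by simpa using hα₀ : l α₀ ≠ 0) h2.symm
  have hpI : p ∈ vanishingIdealOn (X : Set (Fin n → K)) := by
    rw [mem_vanishingIdealOn]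
    intro x hx
    rw [Finsupp.linearCombination_apply, Finsupp.sum] at hl
    have h0 := congrFun hl ⟨x, hx⟩
    simp only [Finset.sum_apply, Pi.smul_apply, Pi.zero_apply, smul_eq_mul] at h0
    have heval : MvPolynomial.eval x p =
        ∑ α ∈ l.support, l α * MvPolynomial.eval x
          (MvPolynomial.monomial (α.1 : Fin n →₀ ℕ) 1) := by
      rw [hp, map_sum]
      refine Finset.sum_congr rfl fun α _ => ?_
      simp [MvPolynomial.eval_monomial]
    rw [heval]
    simpa [mfun] using h0
  have hβ := leadExp_mem ord hpne
  obtain ⟨α, hαl, hαβ⟩ := Finset.mem_image.mp (hsupp hβ)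
  exact α.2 p hpI hpne fun i => le_of_eq (by rw [hαβ])

lemma stdMon_finite (X : Finset (Fin n → K)) :
    (stdMon ord (vanishingIdealOn (X : Set (Fin n → K)))).Finite := by
  have := (mfun_linearIndependent ord X).finite
  exact Set.finite_coe_iff.mp this

lemma stdMon_ncard_le (X : Finset (Fin n → K)) :
    (stdMon ord (vanishingIdealOn (X : Set (Fin n → K)))).ncard ≤ X.card := by
  have hfin := stdMon_finite ord X
  haveI := hfin.fintype
  have h := (mfun_linearIndependent ord X).fintype_card_le_finrank
  rw [Module.finrank_fintype_fun_eq_card, Fintype.card_coe] at h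
  calc (stdMon ord (vanishingIdealOn (X : Set (Fin n → K)))).ncard
      = Nat.card _ := (Nat.card_coe_set_eq _).symm
    _ = Fintype.card _ := Nat.card_eq_fintype_card
    _ ≤ X.card := h

end ClarkAux

namespace ClarkAux

variable {K : Type*} [Field K] {n : ℕ} (ord : LinearOrder (Fin n →₀ ℕ))

lemma card_le_stdMon_ncard (hadm : Admissible ord) (Z : Finset (Fin n → K)) :
    Z.card ≤ (stdMon ord (vanishingIdealOn (Z : Set (Fin n → K)))).ncard := by
  classical
  set S := stdMon ord (vanishingIdealOn (Z : Set (Fin n → K))) with hS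
  set W := Submodule.span K (mfun Z '' S) with hW
  -- every monomial function lies in W
  have key : ∀ β : Fin n →₀ ℕ, mfun Z β ∈ W := by
    intro β
    refine (ord_wf ord hadm).induction (C := fun γ => mfun Z γ ∈ W) β ?_
    intro γ IH
    by_cases hγ : γ ∈ S
    · exact Submodule.subset_span ⟨γ, hγ, rfl⟩
    · rw [hS, stdMon, Set.mem_setOf_eq] at hγ
      push_neg at hγ
      obtain ⟨p, hpJ, hp0, hdiv⟩ := hγ
      set δ := γ - leadExp ord p hp0 with hδ
      have hle : leadExp ord p hp0 ≤ γ := Finsupp.le_def.mpr hdiv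
      have hγeq : δ + leadExp ord p hp0 = γ := by
        rw [hδ, tsub_add_cancel_of_le hle]
      set q := MvPolynomial.monomial δ (1 : K) * p with hq
      have hq0 : q ≠ 0 :=
        mul_ne_zero (by simp [MvPolynomial.monomial_eq_zero]) hp0
      have hqsupp : ∀ ν, ν ∈ q.support ↔ ∃ γ' ∈ p.support, δ + γ' = ν := by
        intro ν
        constructor
        · intro hν
          rw [MvPolynomial.mem_support_iff, hq, MvPolynomial.coeff_monomial_mul'] at hν
          by_cases hdn : δ ≤ ν
          · rw [if_pos hdn, one_mul] at hν
            exact ⟨ν - δ, MvPolynomial.mem_support_iff.mpr hν, add_tsub_cancel_of_le hdn⟩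
          · rw [if_neg hdn] at hν; exact absurd rfl hν
        · rintro ⟨γ', hγ', rfl⟩
          rw [MvPolynomial.mem_support_iff, hq, MvPolynomial.coeff_monomial_mul, one_mul]
          exact MvPolynomial.mem_support_iff.mp hγ'
      have hγq : γ ∈ q.support :=
        (hqsupp γ).mpr ⟨leadExp ord p hp0, leadExp_mem ord hp0, hγeq⟩
      have hLMq : leadExp ord q hq0 = γ := by
        refine ord.le_antisymm _ _ ?_ (le_leadExp ord hq0 hγq)
        obtain ⟨γ', hγ'p, hγ'eq⟩ := (hqsupp _).mp (leadExp_mem ord hq0)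
        rw [← hγ'eq, ← hγeq]
        have h1 : ord.le γ' (leadExp ord p hp0) := le_leadExp ord hp0 hγ'p
        have h2 := hadm.1 γ' (leadExp ord p hp0) δ h1
        rwa [add_comm γ' δ, add_comm (leadExp ord p hp0) δ] at h2
      -- evaluation of q vanishes on Z
      have hqJ : ∀ x : {y // y ∈ Z}, MvPolynomial.eval x.1 q = 0 := by
        intro x
        rw [hq, map_mul, mem_vanishingIdealOn.mp hpJ x.1 (Finset.mem_coe.mpr x.2), mul_zero]
      have hsum : (∑ ν ∈ q.support, q.coeff ν • mfun Z ν) = 0 := by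
        funext x
        simp only [Finset.sum_apply, Pi.smul_apply, Pi.zero_apply, smul_eq_mul]
        have hterm : ∀ ν ∈ q.support, q.coeff ν * mfun Z ν x =
            MvPolynomial.eval x.1 (MvPolynomial.monomial ν (q.coeff ν)) := by
          intro ν _
          simp [mfun, MvPolynomial.eval_monomial]
        rw [Finset.sum_congr rfl hterm, ← map_sum,
          MvPolynomial.support_sum_monomial_coeff, hqJ x]
      have hmain : q.coeff γ • mfun Z γ =
          - ∑ ν ∈ q.support.erase γ, q.coeff ν • mfun Z ν := by
        have h3 := Finset.add_sum_erase _ (fun ν => q.coeff ν • mfun Z ν) hγq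
        rw [hsum] at h3
        exact eq_neg_of_add_eq_zero_left h3
      have hWerase : (∑ ν ∈ q.support.erase γ, q.coeff ν • mfun Z ν) ∈ W := by
        refine Submodule.sum_mem _ fun ν hν => Submodule.smul_mem _ _ (IH ν ?_)
        have hle2 : ord.le ν γ := hLMq ▸ le_leadExp ord hq0 (Finset.mem_of_mem_erase hν)
        have hne : ν ≠ γ := Finset.ne_of_mem_erase hν
        exact (ord.lt_iff_le_not_ge ν γ).mpr
          ⟨hle2, fun h => hne (ord.le_antisymm _ _ hle2 h)⟩
      have hrw : mfun Z γ = (q.coeff γ)⁻¹ • (q.coeff γ • mfun Z γ) := by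
        rw [smul_smul, inv_mul_cancel₀ (MvPolynomial.mem_support_iff.mp hγq), one_smul]
      rw [hrw, hmain]
      exact Submodule.smul_mem _ _ (Submodule.neg_mem _ hWerase)
  -- every polynomial function lies in W
  have hpoly : ∀ p : MvPolynomial (Fin n) K,
      (fun x : {y // y ∈ Z} => MvPolynomial.eval x.1 p) ∈ W := by
    intro p
    have hpe : (fun x : {y // y ∈ Z} => MvPolynomial.eval x.1 p) =
        ∑ ν ∈ p.support, p.coeff ν • mfun Z ν := by
      funext x
      simp only [Finset.sum_apply, Pi.smul_apply, smul_eq_mul, mfun,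
        MvPolynomial.eval_monomial, one_mul]
      rw [MvPolynomial.eval_eq]
      rfl
    rw [hpe]
    exact Submodule.sum_mem _ fun ν _ => Submodule.smul_mem _ _ (key ν)
  -- indicator functions
  have hind : ∀ z : {y // y ∈ Z}, ∃ p : MvPolynomial (Fin n) K,
      MvPolynomial.eval z.1 p = 1 ∧
      ∀ y : {y // y ∈ Z}, y ≠ z → MvPolynomial.eval y.1 p = 0 := by
    intro z
    refine ⟨∏ y ∈ Z.erase z.1,
      if h : ∃ i, z.1 i ≠ y i then
        MvPolynomial.C (z.1 h.choose - y h.choose)⁻¹ *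
          (MvPolynomial.X h.choose - MvPolynomial.C (y h.choose))
      else 1, ?_, ?_⟩
    · rw [map_prod]
      refine Finset.prod_eq_one fun y hy => ?_
      have hyz : y ≠ z.1 := Finset.ne_of_mem_erase hy
      have h : ∃ i, z.1 i ≠ y i := by
        by_contra hc
        push_neg at hc
        exact hyz (funext fun i => (hc i).symm)
      rw [dif_pos h]
      simp only [map_mul, map_sub, MvPolynomial.eval_C, MvPolynomial.eval_X]
      exact inv_mul_cancel₀ (sub_ne_zero.mpr h.choose_spec)
    · intro y hyz
      rw [map_prod]
      have hy : y.1 ∈ Z.erase z.1 :=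
        Finset.mem_erase.mpr ⟨fun h => hyz (Subtype.ext h), y.2⟩
      refine Finset.prod_eq_zero hy ?_
      have h : ∃ i, z.1 i ≠ y.1 i := by
        by_contra hc
        push_neg at hc
        have hyeq : y = z := Subtype.ext (funext fun i => (hc i).symm)
        exact hyz hyeq
      rw [dif_pos h]
      simp
  -- W = ⊤
  have htop : W = ⊤ := by
    rw [eq_top_iff]
    rintro u -
    choose pz h1 h0 using hind
    have hu : u = ∑ z : {y // y ∈ Z},
        u z • (fun x : {y // y ∈ Z} => MvPolynomial.eval x.1 (pz z)) := by
      funext x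
      simp only [Finset.sum_apply, Pi.smul_apply, smul_eq_mul]
      rw [Finset.sum_eq_single x]
      · rw [h1 x, mul_one]
      · intro z _ hzx
        rw [h0 z x (Ne.symm hzx), mul_zero]
      · intro hx; exact absurd (Finset.mem_univ x) hx
    rw [hu]
    exact Submodule.sum_mem _ fun z _ => Submodule.smul_mem _ _ (hpoly (pz z))
  -- counting
  have hfinS : S.Finite := stdMon_finite ord Z
  have h2 := finrank_span_finset_le_card (R := K) (hfinS.toFinset.image (mfun Z))
  have hcoe : ((hfinS.toFinset.image (mfun Z) : Finset _) : Set ({y // y ∈ Z} → K)) =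
      mfun Z '' S := by
    rw [Finset.coe_image, Set.Finite.coe_toFinset]
  rw [Set.finrank, hcoe, ← hW, htop, finrank_top,
    Module.finrank_fintype_fun_eq_card, Fintype.card_coe] at h2
  calc Z.card ≤ (hfinS.toFinset.image (mfun Z)).card := h2
    _ ≤ hfinS.toFinset.card := Finset.card_image_le
    _ = S.ncard := (Set.ncard_eq_toFinset_card _ hfinS).symm

end ClarkAux

/-- Clark's monomial Alon–Füredi theorem. -/
theorem stmt_16 {K : Type*} [Field K] {n : ℕ}
    (ord : LinearOrder (Fin n →₀ ℕ)) (hadm : Admissible ord)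
    (X : Finset (Fin n → K)) (f g : MvPolynomial (Fin n) K)
    (hgmem : g ∈ vanishingIdealOn (X : Set (Fin n → K)) + Ideal.span {f})
    (hg : g ≠ 0) :
    {α ∈ stdMon ord (vanishingIdealOn (X : Set (Fin n → K))) |
        ∀ i, leadExp ord g hg i ≤ α i}.ncard ≤
      {x : Fin n → K | x ∈ X ∧ MvPolynomial.eval x f ≠ 0}.ncard := by
  classical
  obtain ⟨h, hh, b, hb, hsum⟩ := Submodule.mem_sup.mp hgmem
  obtain ⟨q, hq⟩ := Ideal.mem_span_singleton'.mp hb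
  set Z := X.filter (fun x => MvPolynomial.eval x f = 0) with hZ
  have hgJ : g ∈ vanishingIdealOn (Z : Set (Fin n → K)) := by
    rw [ClarkAux.mem_vanishingIdealOn]
    intro z hz
    rw [Finset.mem_coe, hZ, Finset.mem_filter] at hz
    have h1 : MvPolynomial.eval z h = 0 :=
      ClarkAux.mem_vanishingIdealOn.mp hh z (Finset.mem_coe.mpr hz.1)
    have h2 : MvPolynomial.eval z b = 0 := by rw [← hq, map_mul, hz.2, mul_zero]
    rw [← hsum, map_add, h1, h2, add_zero]
  set A := stdMon ord (vanishingIdealOn (X : Set (Fin n → K))) with hA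
  set B := stdMon ord (vanishingIdealOn (Z : Set (Fin n → K))) with hB
  set S := {α ∈ A | ∀ i, leadExp ord g hg i ≤ α i} with hSdef
  have hIle : ∀ p, p ∈ vanishingIdealOn (X : Set (Fin n → K)) →
      p ∈ vanishingIdealOn (Z : Set (Fin n → K)) := by
    intro p hp
    rw [ClarkAux.mem_vanishingIdealOn] at hp ⊢
    intro z hz
    rw [Finset.mem_coe, hZ, Finset.mem_filter] at hz
    exact hp z (Finset.mem_coe.mpr hz.1)
  have hBA : B ⊆ A := fun α hα => by
    intro g' hg' hg'0
    exact hα g' (hIle g' hg') hg'0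
  have hdisj : Disjoint S B := by
    rw [Set.disjoint_left]
    intro α hαS hαB
    exact hαB g hgJ hg hαS.2
  have hAfin : A.Finite := ClarkAux.stdMon_finite ord X
  have hSsub : S ⊆ A := fun α hα => hα.1
  have hSfin : S.Finite := hAfin.subset hSsub
  have hBfin : B.Finite := hAfin.subset hBA
  have hunion : S.ncard + B.ncard ≤ A.ncard := by
    rw [← Set.ncard_union_eq hdisj hSfin hBfin]
    exact Set.ncard_le_ncard (Set.union_subset hSsub hBA) hAfin
  have hAcard : A.ncard ≤ X.card := ClarkAux.stdMon_ncard_le ord X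
  have hBcard : Z.card ≤ B.ncard := ClarkAux.card_le_stdMon_ncard ord hadm Z
  have hsplit : Z.card + (X.filter (fun x => ¬ MvPolynomial.eval x f = 0)).card = X.card :=
    Finset.card_filter_add_card_filter_not (p := fun x => MvPolynomial.eval x f = 0)
  have hRHS : {x : Fin n → K | x ∈ X ∧ MvPolynomial.eval x f ≠ 0} =
      ((X.filter (fun x => ¬ MvPolynomial.eval x f = 0) : Finset _) : Set _) := by
    ext x; simp [Finset.mem_filter]
  rw [hRHS, Set.ncard_coe_finset]
  omega
end

section
/- Let K be a field, Xᵢ, Yᵢ ⊆ K finite with Yᵢ ⊆ Xᵢ, P = (∏Xᵢ)\(∏Yᵢ), aᵢ = |Xᵢ|, bᵢ = |Yᵢ|. For each i choose Eᵢ ⊆ Xᵢ with |Eᵢ| = eᵢ < aᵢ − 1 such that either Eᵢ ⊆ Xᵢ \ Yᵢ or Xᵢ \ Yᵢ ⊆ Eᵢ, and let f := ∏ᵢ ∏_{a∈Eᵢ}(xᵢ−a). Then the leading monomial of f is x₁^{e₁}⋯xₙ^{eₙ} (for every admissible ordering) and |P \ V(f)| = ∏ᵢ(aᵢ − eᵢ)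 − ∏ᵢ min(bᵢ, aᵢ − eᵢ). -/
open MvPolynomial

lemma coeff_mul_of_bdd {K : Type*} [CommSemiring K] {n : ℕ}
    (p q : MvPolynomial (Fin n) K) (μ ν : Fin n →₀ ℕ)
    (hp : ∀ σ ∈ p.support, ∀ j, σ j ≤ μ j) (hq : ∀ τ ∈ q.support, ∀ j, τ j ≤ ν j) :
    (p * q).coeff (μ + ν) = p.coeff μ * q.coeff ν := by
  classical
  rw [MvPolynomial.coeff_mul]
  have hmem : (μ, ν) ∈ Finset.HasAntidiagonal.antidiagonal (μ + ν) := Finset.HasAntidiagonal.mem_antidiagonal.mpr rfl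
  rw [Finset.sum_eq_single_of_mem (μ, ν) hmem ?_]
  rintro ⟨σ, τ⟩ hb hne
  by_cases h1 : p.coeff σ = 0
  · simp [h1]
  by_cases h2 : q.coeff τ = 0
  · simp [h2]
  exfalso
  have hb1 := hp σ (MvPolynomial.mem_support_iff.mpr h1)
  have hb2 := hq τ (MvPolynomial.mem_support_iff.mpr h2)
  have hsum : σ + τ = μ + ν := Finset.HasAntidiagonal.mem_antidiagonal.mp hb
  apply hne
  have h1' : σ = μ := by
    ext j
    have h3 := congrArg (fun f : Fin n →₀ ℕ => f j) hsum
    simp only [Finsupp.add_apply] at h3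
    have := hb1 j; have := hb2 j; omega
  have h2' : τ = ν := by
    ext j
    have h3 := congrArg (fun f : Fin n →₀ ℕ => f j) hsum
    simp only [Finsupp.add_apply] at h3
    have := hb1 j; have := hb2 j; omega
  rw [h1', h2']

lemma linfac_props {K : Type*} [Field K] {n : ℕ} (i : Fin n) (A : Finset K) :
    (∀ σ ∈ (∏ a ∈ A, (X i - C a) : MvPolynomial (Fin n) K).support, ∀ j,
      σ j ≤ Finsupp.single i A.card j) ∧
    (∏ a ∈ A, (X i - C a) : MvPolynomial (Fin n) K).coeff (Finsupp.single i A.card) = 1 := by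
  classical
  induction A using Finset.induction_on with
  | empty =>
      constructor
      · intro σ hσ j
        simp only [Finset.prod_empty] at hσ
        have := MvPolynomial.mem_support_iff.mp hσ
        rw [MvPolynomial.coeff_one] at this
        have h0 : σ = 0 := by by_contra h; exact this (if_neg (fun hh => h hh.symm))
        simp [h0]
      · simp
  | @insert a A ha ih =>
      have hfac : ∀ σ ∈ (X i - C a : MvPolynomial (Fin n) K).support, ∀ j,
          σ j ≤ Finsupp.single i 1 j := by
        intro σ hσ j
        have hne := MvPolynomial.mem_support_iff.mp hσ
        by_cases h : σ = Finsupp.single i 1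
        · simp [h]
        by_cases h0 : σ = 0
        · simp [h0]
        exfalso
        apply hne
        rw [MvPolynomial.coeff_sub, MvPolynomial.coeff_X', MvPolynomial.coeff_C]
        rw [if_neg (fun hh => h hh.symm), if_neg (fun hh => h0 hh.symm)]
        ring
      have hfacc : (X i - C a : MvPolynomial (Fin n) K).coeff (Finsupp.single i 1) = 1 := by
        rw [MvPolynomial.coeff_sub, MvPolynomial.coeff_X', MvPolynomial.coeff_C]
        rw [if_pos rfl, if_neg (by simp [eq_comm, Finsupp.single_eq_zero])]
        ring
      rw [Finset.prod_insert ha]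
      have hcards : Finsupp.single i (insert a A).card
          = Finsupp.single i 1 + Finsupp.single i A.card := by
        rw [Finset.card_insert_of_notMem ha, ← Finsupp.single_add]
        congr 1
        omega
      constructor
      · intro σ hσ j
        have := MvPolynomial.support_mul _ _ hσ
        rw [Finset.mem_add] at this
        obtain ⟨y, hy, z, hz, hyz⟩ := this
        have hy' := hfac y hy j
        have hz' := ih.1 z hz j
        rw [hcards]
        have : σ j = y j + z j := by rw [← hyz]; simp
        simp only [Finsupp.add_apply]
        omega
      · rw [hcards, coeff_mul_of_bdd _ _ _ _ hfac ih.1, hfacc, ih.2, one_mul]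

lemma prodfac_props {K : Type*} [Field K] {n : ℕ} (E : Fin n → Finset K)
    (s : Finset (Fin n)) :
    (∀ σ ∈ (∏ i ∈ s, ∏ a ∈ E i, (X i - C a) : MvPolynomial (Fin n) K).support, ∀ j,
      σ j ≤ (∑ i ∈ s, Finsupp.single i (E i).card) j) ∧
    (∏ i ∈ s, ∏ a ∈ E i, (X i - C a) : MvPolynomial (Fin n) K).coeff
      (∑ i ∈ s, Finsupp.single i (E i).card) = 1 := by
  classical
  induction s using Finset.induction_on with
  | empty =>
      constructor
      · intro σ hσ j
        simp only [Finset.prod_empty] at hσ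
        have := MvPolynomial.mem_support_iff.mp hσ
        rw [MvPolynomial.coeff_one] at this
        have h0 : σ = 0 := by by_contra h; exact this (if_neg (fun hh => h hh.symm))
        simp [h0]
      · simp
  | @insert i s hi ih =>
      rw [Finset.prod_insert hi, Finset.sum_insert hi]
      constructor
      · intro σ hσ j
        have := MvPolynomial.support_mul _ _ hσ
        rw [Finset.mem_add] at this
        obtain ⟨y, hy, z, hz, hyz⟩ := this
        have hy' := (linfac_props i (E i)).1 y hy j
        have hz' := ih.1 z hz j
        have : σ j = y j + z j := by rw [← hyz]; simp
        simp only [Finsupp.add_apply]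
        omega
      · rw [coeff_mul_of_bdd _ _ _ _ (linfac_props i (E i)).1 ih.1,
          (linfac_props i (E i)).2, ih.2, one_mul]

/-- The lower bound in the punctured Alon–Füredi–Clark theorem is attained. -/
theorem stmt_19 {K : Type*} [Field K] [DecidableEq K] {n : ℕ} (X Y E : Fin n → Finset K)
    (hYX : ∀ i, Y i ⊆ X i) (hEX : ∀ i, E i ⊆ X i)
    (hcard : ∀ i, (E i).card + 1 < (X i).card)
    (hE : ∀ i, E i ⊆ X i \ Y i ∨ X i \ Y i ⊆ E i) :
    (∃ hf : (∏ i, ∏ a ∈ E i, (MvPolynomial.X i - MvPolynomial.C a) :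
        MvPolynomial (Fin n) K) ≠ 0,
      ∀ ord : LinearOrder (Fin n →₀ ℕ), Admissible ord →
        ∀ i, leadExp ord
          (∏ i, ∏ a ∈ E i, (MvPolynomial.X i - MvPolynomial.C a)) hf i =
          (E i).card) ∧
    {z : Fin n → K | ((∀ i, z i ∈ X i) ∧ ¬ (∀ i, z i ∈ Y i)) ∧
        MvPolynomial.eval z
          (∏ i, ∏ a ∈ E i, (MvPolynomial.X i - MvPolynomial.C a)) ≠ 0}.ncard =
      ∏ i, ((X i).card - (E i).card) -
        ∏ i, min ((Y i).card) ((X i).card - (E i).card) := by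
  classical
  have hμapp : ∀ j : Fin n, (∑ i, Finsupp.single i ((E i).card)) j = (E j).card := by
    intro j
    rw [Finsupp.finset_sum_apply]
    simp [Finsupp.single_apply]
  have hprops := prodfac_props E (Finset.univ : Finset (Fin n))
  have hcoeff : (∏ i, ∏ a ∈ E i, (MvPolynomial.X i - MvPolynomial.C a) :
      MvPolynomial (Fin n) K).coeff (∑ i, Finsupp.single i ((E i).card)) = 1 := hprops.2
  have hf : (∏ i, ∏ a ∈ E i, (MvPolynomial.X i - MvPolynomial.C a) :
      MvPolynomial (Fin n) K) ≠ 0 := fun h => by simp [h] at hcoeff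
  constructor
  · refine ⟨hf, fun ord hadm i => ?_⟩
    have hle : leadExp ord (∏ i, ∏ a ∈ E i, (MvPolynomial.X i - MvPolynomial.C a)) hf
        = ∑ i, Finsupp.single i ((E i).card) := by
      have hμmem : (∑ i, Finsupp.single i ((E i).card)) ∈
          (∏ i, ∏ a ∈ E i, (MvPolynomial.X i - MvPolynomial.C a) :
            MvPolynomial (Fin n) K).support :=
        MvPolynomial.mem_support_iff.mpr (by rw [hcoeff]; exact one_ne_zero)
      apply ord.le_antisymm
      · exact @Finset.max'_le _ ord _ _ _ (fun ν hν => hadm.2 ν _ (fun j => hprops.1 ν hν j))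
      · exact @Finset.le_max' _ ord _ _ hμmem
    rw [hle, hμapp]
  · have heval : ∀ z : Fin n → K,
        (MvPolynomial.eval z (∏ i, ∏ a ∈ E i,
          (MvPolynomial.X i - MvPolynomial.C a)) ≠ 0 ↔ ∀ i, z i ∉ E i) := by
      intro z
      rw [map_prod, Finset.prod_ne_zero_iff]
      constructor
      · intro h i hmem
        have h2 := h i (Finset.mem_univ i)
        rw [map_prod, Finset.prod_ne_zero_iff] at h2
        have := h2 (z i) hmem
        simp at this
      · intro h i _
        rw [map_prod, Finset.prod_ne_zero_iff]
        intro a ha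
        simp only [map_sub, MvPolynomial.eval_X, MvPolynomial.eval_C]
        intro hz
        exact h i (by rwa [sub_eq_zero.mp hz])
    set A : Finset (Fin n → K) := Fintype.piFinset (fun i => X i \ E i) with hA
    set B : Finset (Fin n → K) := Fintype.piFinset (fun i => Y i \ E i) with hB
    have hBA : B ⊆ A := by
      apply Fintype.piFinset_subset
      intro i
      exact Finset.sdiff_subset_sdiff (hYX i) (le_refl _)
    have hset : {z : Fin n → K | ((∀ i, z i ∈ X i) ∧ ¬ (∀ i, z i ∈ Y i)) ∧
        MvPolynomial.eval z (∏ i, ∏ a ∈ E i,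
          (MvPolynomial.X i - MvPolynomial.C a)) ≠ 0} = ↑(A \ B) := by
      ext z
      simp only [Set.mem_setOf_eq, Finset.coe_sdiff, Set.mem_diff, Finset.mem_coe,
        hA, hB, Fintype.mem_piFinset, Finset.mem_sdiff, heval z]
      constructor
      · rintro ⟨⟨hX, hY⟩, hEv⟩
        refine ⟨fun i => ⟨hX i, hEv i⟩, fun hall => hY (fun i => (hall i).1)⟩
      · rintro ⟨hXE, hYE⟩
        refine ⟨⟨fun i => (hXE i).1, fun hall => hYE (fun i => ⟨hall i, (hXE i).2⟩)⟩,
          fun i => (hXE i).2⟩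
    rw [hset, Set.ncard_coe_finset, Finset.card_sdiff_of_subset hBA, hA, hB,
      Fintype.card_piFinset, Fintype.card_piFinset]
    congr 1
    · exact Finset.prod_congr rfl (fun i _ => Finset.card_sdiff_of_subset (hEX i))
    · refine Finset.prod_congr rfl (fun i _ => ?_)
      rcases hE i with h | h
      · have hdisj : Disjoint (Y i) (E i) := by
          rw [Finset.disjoint_right]
          intro a haE haY
          exact (Finset.mem_sdiff.mp (h haE)).2 haY
        rw [Finset.sdiff_eq_self_iff_disjoint.mpr hdisj]
        refine (min_eq_left ?_).symm
        rw [← Finset.card_sdiff_of_subset (hEX i)]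
        apply Finset.card_le_card
        intro a ha
        exact Finset.mem_sdiff.mpr ⟨hYX i ha, Finset.disjoint_left.mp hdisj ha⟩
      · have hYE : Y i \ E i = X i \ E i := by
          ext a
          simp only [Finset.mem_sdiff]
          constructor
          · rintro ⟨h1, h2⟩; exact ⟨hYX i h1, h2⟩
          · rintro ⟨h1, h2⟩
            refine ⟨?_, h2⟩
            by_contra hY
            exact h2 (h (Finset.mem_sdiff.mpr ⟨h1, hY⟩))
        rw [hYE, Finset.card_sdiff_of_subset (hEX i)]
        refine (min_eq_right ?_).symm
        rw [← Finset.card_sdiff_of_subset (hEX i)]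
        apply Finset.card_le_card
        intro a ha
        have h3 := Finset.mem_sdiff.mp ha
        by_contra hY
        exact h3.2 (h (Finset.mem_sdiff.mpr ⟨h3.1, hY⟩))
end
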